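/- arXiv:1310.3004 — 9 statements merged into one kernel-verified Lean document; each statement's English description precedes it below -/
import Mathlib

section
/- (Fisher consistency of FLAME) Let C > 0, θ ∈ [0,1], and p ∈ (0,1) with p ≠ 1/2. Then every global minimizer f* ∈ ℝ of the conditional risk R satisfies: f* > 0 if p > 1/2, and f* < 0 if p < 1/2; that is, sign(f*) = sign(p − 1/2). -/
/-- The DWD loss with parameter `C`. -/
noncomputable def dwdLoss (C u : ℝ) : ℝ :=
  if u ≤ 1 / Real.sqrt C then 2 * Real.sqrt C - C * u else 1 / u

/-- The FLAME loss with parameters `C` and `θ`. -/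
noncomputable def flameLoss (C θ u : ℝ) : ℝ :=
  max (dwdLoss C u - θ * Real.sqrt C) 0

/-- The conditional risk `R(f) = p·L(f,θ) + (1−p)·L(−f,θ)`. -/
noncomputable def condRisk (C θ p f : ℝ) : ℝ :=
  p * flameLoss C θ f + (1 - p) * flameLoss C θ (-f)

/-!
Since `R(f) − R(−f) = (2p − 1)(L(f) − L(−f))`, for `p > 1/2` a minimizer must have
`L(f) ≤ L(−f)`. On `(−∞, 1/√C]` the loss is the line `(2 − θ)√C − C u`, so a negative `f` has
`L(f) > L(0) ≥ L(−f)`, and `f = 0` is beaten by `1/√C`, where the same line gives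
`R(1/√C) = R(0) − (2p − 1)√C`. The case `p < 1/2` follows from `R_p(f) = R_{1−p}(−f)`.
-/

open Real

section
variable {C θ : ℝ}

lemma flameLoss_of_le_inv_sqrt (hC : 0 ≤ C) (hθ : θ ≤ 1) {u : ℝ} (hu : u ≤ 1 / √C) :
    flameLoss C θ u = (2 - θ) * √C - C * u := by
  have hCu : C * u ≤ √C := by
    simpa only [mul_one_div, div_sqrt] using mul_le_mul_of_nonneg_left hu hC
  rw [flameLoss, dwdLoss, if_pos hu, max_eq_left] <;>
    nlinarith [sqrt_nonneg C]

lemma flameLoss_le_of_nonneg (hC : 0 < C) (hθ : θ ≤ 1) {v : ℝ} (hv : 0 ≤ v) :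
    flameLoss C θ v ≤ (2 - θ) * √C := by
  have hs : 0 < √C := sqrt_pos.2 hC
  by_cases hv' : v ≤ 1 / √C
  · rw [flameLoss_of_le_inv_sqrt hC.le hθ hv']
    nlinarith [mul_nonneg hC.le hv]
  · have hinv : 1 / v < √C := by
      simpa only [one_div_one_div] using
        one_div_lt_one_div_of_lt (by positivity) (not_le.1 hv')
    rw [flameLoss, dwdLoss, if_neg hv']
    exact max_le (by nlinarith) (by nlinarith)

lemma condRisk_one_sub (p f : ℝ) : condRisk C θ (1 - p) f = condRisk C θ p (-f) := by
  simp only [condRisk, neg_neg]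
  ring

lemma condRisk_sub_condRisk_neg (p f : ℝ) :
    condRisk C θ p f - condRisk C θ p (-f) =
      (2 * p - 1) * (flameLoss C θ f - flameLoss C θ (-f)) := by
  simp only [condRisk, neg_neg]
  ring

variable {p : ℝ}

lemma condRisk_neg_lt_of_neg (hC : 0 < C) (hθ : θ ≤ 1) (hp : 1 / 2 < p) {f : ℝ} (hf : f < 0) :
    condRisk C θ p (-f) < condRisk C θ p f := by
  have hLf := flameLoss_of_le_inv_sqrt hC.le hθ (hf.le.trans (by positivity) : f ≤ 1 / √C)
  have hLnf := flameLoss_le_of_nonneg hC hθ (neg_nonneg.2 hf.le)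
  have hgap : 0 < flameLoss C θ f - flameLoss C θ (-f) := by
    rw [hLf]
    nlinarith [mul_neg_of_pos_of_neg hC hf]
  rw [← sub_pos, condRisk_sub_condRisk_neg]
  exact mul_pos (by linarith) hgap

lemma condRisk_inv_sqrt_lt_zero (hC : 0 < C) (hθ : θ ≤ 1) (hp : 1 / 2 < p) :
    condRisk C θ p (1 / √C) < condRisk C θ p 0 := by
  have hs : 0 < √C := sqrt_pos.2 hC
  have hg : 0 < 1 / √C := by positivity
  simp only [condRisk, neg_zero]
  rw [flameLoss_of_le_inv_sqrt hC.le hθ le_rfl, flameLoss_of_le_inv_sqrt hC.le hθ (by linarith),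
    flameLoss_of_le_inv_sqrt hC.le hθ hg.le, mul_neg, mul_one_div, div_sqrt]
  nlinarith

lemma pos_of_forall_condRisk_le (hC : 0 < C) (hθ : θ ≤ 1) (hp : 1 / 2 < p) {x : ℝ}
    (hmin : ∀ f, condRisk C θ p x ≤ condRisk C θ p f) : 0 < x := by
  rcases lt_trichotomy x 0 with hx | rfl | hx
  · exact absurd (hmin (-x)) (not_le.2 (condRisk_neg_lt_of_neg hC hθ hp hx))
  · exact absurd (hmin _) (not_le.2 (condRisk_inv_sqrt_lt_zero hC hθ hp))
  · exact hx

end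

theorem flame_fisher_consistent_general (C θ p : ℝ) (hC : 0 < C) (hθ : θ ∈ Set.Icc (0 : ℝ) 1) :
    ∀ fstar : ℝ, (∀ f : ℝ, condRisk C θ p fstar ≤ condRisk C θ p f) →
      ((1 / 2 < p → 0 < fstar) ∧ (p < 1 / 2 → fstar < 0)) := by
  intro fstar hmin
  refine ⟨fun hp => pos_of_forall_condRisk_le hC hθ.2 hp hmin, fun hp => ?_⟩
  have : 0 < -fstar := pos_of_forall_condRisk_le (p := 1 - p) hC hθ.2 (by linarith) fun f => by
    simpa only [condRisk_one_sub, neg_neg] using hmin (-f)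
  linarith

theorem flame_fisher_consistent (C θ p : ℝ) (hC : 0 < C) (hθ : θ ∈ Set.Icc (0 : ℝ) 1)
    (hp : p ∈ Set.Ioo (0 : ℝ) 1) (hp2 : p ≠ 1 / 2) :
    ∀ fstar : ℝ, (∀ f : ℝ, condRisk C θ p fstar ≤ condRisk C θ p f) →
      ((1 / 2 < p → 0 < fstar) ∧ (p < 1 / 2 → fstar < 0)) :=
  flame_fisher_consistent_general C θ p hC hθ
end

section
/- Let C > 0, θ ∈ [0,1], and p = 1/2. Then the conditional risk R is constant equal to (2−θ)√C on the interval [−1/√C, 1/√C], and every f ∈ [−1/√C, 1/√C] is a global minimizer of R over ℝ. -/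
/-!
On `u ≤ 1/√C` the DWD loss is the line `2√C - C u`, which is tangent to `1/u` at `u = 1/√C`
and lies below it everywhere else; so `V u + V (-u) ≥ 4√C` for all `u`, with equality on
`[-1/√C, 1/√C]`. Dropping the truncation at `0` of the FLAME loss can only lower the risk, so at
`p = 1/2` the risk is at least `(2 - θ)√C` everywhere, and for `θ ≤ 1` the truncation is inactive
on `[-1/√C, 1/√C]`, where the bound is attained.
-/

open Real

lemma dwdLoss_of_le {C u : ℝ} (hu : u ≤ 1 / √C) : dwdLoss C u = 2 * √C - C * u :=
  if_pos hu

lemma sub_mul_le_dwdLoss {C : ℝ} (hC : 0 ≤ C) (u : ℝ) : 2 * √C - C * u ≤ dwdLoss C u := by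
  unfold dwdLoss
  split_ifs with hu
  · exact le_rfl
  have hu_pos : 0 < u := lt_of_le_of_lt (by positivity) (not_le.mp hu)
  have hsq : √C * √C = C := mul_self_sqrt hC
  have key : 1 / u - (2 * √C - C * u) = (√C * u - 1) ^ 2 / u := by
    field_simp
    linear_combination (-(u * u)) * hsq
  have : 0 ≤ (√C * u - 1) ^ 2 / u := by positivity
  linarith

lemma flameLoss_of_le {C θ u : ℝ} (hC : 0 ≤ C) (hθ : θ ≤ 1) (hu : u ≤ 1 / √C) :
    flameLoss C θ u = (2 - θ) * √C - C * u := by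
  have hCu : C * u ≤ √C :=
    calc C * u ≤ C * (1 / √C) := mul_le_mul_of_nonneg_left hu hC
      _ = √C := by rw [mul_one_div, div_sqrt]
  have hθC : θ * √C ≤ √C := mul_le_of_le_one_left (sqrt_nonneg C) hθ
  rw [flameLoss, dwdLoss_of_le hu, max_eq_left (by linarith)]
  ring

lemma condRisk_half_ge {C : ℝ} (hC : 0 ≤ C) (θ g : ℝ) :
    (2 - θ) * √C ≤ condRisk C θ (1 / 2) g := by
  have h₁ : dwdLoss C g - θ * √C ≤ flameLoss C θ g := le_max_left _ _
  have h₂ : dwdLoss C (-g) - θ * √C ≤ flameLoss C θ (-g) := le_max_left _ _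
  have t₁ := sub_mul_le_dwdLoss hC g
  have t₂ := sub_mul_le_dwdLoss hC (-g)
  unfold condRisk
  linarith

lemma condRisk_half_of_mem_Icc {C θ f : ℝ} (hC : 0 ≤ C) (hθ : θ ≤ 1)
    (hf : f ∈ Set.Icc (-(1 / √C)) (1 / √C)) :
    condRisk C θ (1 / 2) f = (2 - θ) * √C := by
  rw [condRisk, flameLoss_of_le hC hθ hf.2, flameLoss_of_le hC hθ (neg_le.mp hf.1)]
  ring

theorem condRisk_constant_at_half (C θ : ℝ) (hC : 0 < C) (hθ : θ ∈ Set.Icc (0 : ℝ) 1) :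
    (∀ f ∈ Set.Icc (-(1 / Real.sqrt C)) (1 / Real.sqrt C),
      condRisk C θ (1 / 2) f = (2 - θ) * Real.sqrt C) ∧
    (∀ f ∈ Set.Icc (-(1 / Real.sqrt C)) (1 / Real.sqrt C),
      ∀ g : ℝ, condRisk C θ (1 / 2) f ≤ condRisk C θ (1 / 2) g) := by
  refine ⟨fun f hf ↦ condRisk_half_of_mem_Icc hC.le hθ.2 hf, fun f hf g ↦ ?_⟩
  rw [condRisk_half_of_mem_Icc hC.le hθ.2 hf]
  exact condRisk_half_ge hC.le θ g
end

section
/- Let C > 0, p ∈ (1/2, 1), and θ ∈ [0,1] with θ ≤ √((1−p)/p). Then the point f* = (1/√C)·√(p/(1−p)) is a global minimizer of the conditional risk R over ℝ. -/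
/-!
The FLAME loss is the DWD loss `V` shifted down by `θ√C` and clipped at `0`, so the FLAME risk is
bounded below by the DWD risk `p V(f) + (1-p) V(-f)` minus `θ√C`, with equality wherever neither
clipping is active. `V` is convex, with supporting lines `u ↦ 2a - a²u` for `0 ≤ a ≤ √C`; at the
point `t = f*` the first-order condition `(1-p) C t² = p` makes the combination of the supporting
lines at `t` and `-t` constant in `f`, so `t` minimizes the DWD risk. The hypothesis
`θ ≤ √((1-p)/p)` says exactly that `θ√C ≤ V(t) = 1/t`, so no clipping is active at `t`.
-/

open Real

noncomputable def dwdRisk (C p f : ℝ) : ℝ :=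
  p * dwdLoss C f + (1 - p) * dwdLoss C (-f)

section DWD

variable {C : ℝ}

lemma dwdLoss_of_le_one_div_sqrt {u : ℝ} (h : u ≤ 1 / √C) : dwdLoss C u = 2 * √C - C * u :=
  if_pos h

lemma dwdLoss_of_one_div_sqrt_le (hC : 0 < C) {t : ℝ} (h : 1 / √C ≤ t) :
    dwdLoss C t = 1 / t := by
  have hs : 0 < √C := sqrt_pos.mpr hC
  rcases h.lt_or_eq with h | rfl
  · exact if_neg h.not_ge
  · rw [dwdLoss_of_le_one_div_sqrt le_rfl]
    have := mul_self_sqrt hC.le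
    field_simp
    linarith

lemma two_mul_sub_sq_mul_le_dwdLoss (hC : 0 < C) {a : ℝ} (ha : 0 ≤ a) (has : a ≤ √C) (u : ℝ) :
    2 * a - a ^ 2 * u ≤ dwdLoss C u := by
  have hs : 0 < √C := sqrt_pos.mpr hC
  unfold dwdLoss
  split_ifs with hu
  · have hsu : √C * u ≤ 1 := by rwa [le_div_iff₀' hs] at hu
    have hau : a * u ≤ 1 := by
      rcases le_total u 0 with hu0 | hu0
      · nlinarith
      · nlinarith
    have hCu : C * u = √C ^ 2 * u := by rw [sq_sqrt hC.le]
    nlinarith [mul_nonneg (sub_nonneg.mpr has) (sub_nonneg.mpr hsu),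
      mul_nonneg (sub_nonneg.mpr has) (sub_nonneg.mpr hau)]
  · have hu0 : 0 < u := lt_trans (by positivity) (not_le.mp hu)
    rw [le_div_iff₀ hu0]
    nlinarith [sq_nonneg (1 - a * u)]

lemma dwdLoss_le_dwdLoss_neg (hC : 0 < C) {t : ℝ} (ht : 1 / √C ≤ t) :
    dwdLoss C t ≤ dwdLoss C (-t) := by
  have hs : 0 < √C := sqrt_pos.mpr hC
  have ht₀ : 0 < t := lt_of_lt_of_le (by positivity) ht
  calc dwdLoss C t = 1 / t := dwdLoss_of_one_div_sqrt_le hC ht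
    _ ≤ √C := by rwa [div_le_iff₀ ht₀, ← div_le_iff₀' hs]
    _ ≤ 2 * √C - C * -t := by nlinarith
    _ = dwdLoss C (-t) := (dwdLoss_of_le_one_div_sqrt (by linarith [one_div_pos.mpr hs])).symm

end DWD

lemma dwdRisk_le_of_sq_eq {C p t : ℝ} (hC : 0 < C) (hp₀ : 0 ≤ p) (hp₁ : p ≤ 1)
    (ht : 1 / √C ≤ t) (hopt : (1 - p) * C * t ^ 2 = p) (f : ℝ) :
    dwdRisk C p t ≤ dwdRisk C p f := by
  have hs : 0 < √C := sqrt_pos.mpr hC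
  have ht₀ : 0 < t := lt_of_lt_of_le (by positivity) ht
  have hts : t⁻¹ ≤ √C := by rwa [inv_le_comm₀ ht₀ hs, ← one_div]
  have hpos : -t ≤ 1 / √C := by linarith [one_div_pos.mpr hs]
  calc dwdRisk C p t
      = p * (2 * t⁻¹ - t⁻¹ ^ 2 * f) + (1 - p) * (2 * √C - √C ^ 2 * -f) := by
        rw [dwdRisk, dwdLoss_of_one_div_sqrt_le hC ht, dwdLoss_of_le_one_div_sqrt hpos,
          sq_sqrt hC.le]
        field_simp
        linear_combination (t - f) * hopt
    _ ≤ dwdRisk C p f := by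
        unfold dwdRisk
        gcongr
        · exact two_mul_sub_sq_mul_le_dwdLoss hC (inv_nonneg.mpr ht₀.le) hts f
        · exact two_mul_sub_sq_mul_le_dwdLoss hC hs.le le_rfl (-f)

section Flame

variable {C θ p t f : ℝ}

lemma dwdRisk_sub_le_condRisk (hp₀ : 0 ≤ p) (hp₁ : p ≤ 1) :
    dwdRisk C p f - θ * √C ≤ condRisk C θ p f := by
  have h₁ : p * (dwdLoss C f - θ * √C) ≤ p * flameLoss C θ f :=
    mul_le_mul_of_nonneg_left (le_max_left _ _) hp₀
  have h₂ : (1 - p) * (dwdLoss C (-f) - θ * √C) ≤ (1 - p) * flameLoss C θ (-f) :=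
    mul_le_mul_of_nonneg_left (le_max_left _ _) (sub_nonneg.mpr hp₁)
  rw [dwdRisk, condRisk]
  linarith

lemma condRisk_eq_dwdRisk_sub (h₁ : θ * √C ≤ dwdLoss C f) (h₂ : θ * √C ≤ dwdLoss C (-f)) :
    condRisk C θ p f = dwdRisk C p f - θ * √C := by
  rw [condRisk, flameLoss, flameLoss, max_eq_left (sub_nonneg.mpr h₁),
    max_eq_left (sub_nonneg.mpr h₂), dwdRisk]
  ring

lemma condRisk_le_of_dwdRisk_le (hp₀ : 0 ≤ p) (hp₁ : p ≤ 1) (h₁ : θ * √C ≤ dwdLoss C t)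
    (h₂ : θ * √C ≤ dwdLoss C (-t)) (hmin : dwdRisk C p t ≤ dwdRisk C p f) :
    condRisk C θ p t ≤ condRisk C θ p f :=
  calc condRisk C θ p t = dwdRisk C p t - θ * √C := condRisk_eq_dwdRisk_sub h₁ h₂
    _ ≤ dwdRisk C p f - θ * √C := by gcongr
    _ ≤ condRisk C θ p f := dwdRisk_sub_le_condRisk hp₀ hp₁

end Flame

theorem condRisk_minimizer_explicit_general (C θ p : ℝ) (hC : 0 < C)
    (hp : p ∈ Set.Ioo (1 / 2 : ℝ) 1) (hθp : θ ≤ Real.sqrt ((1 - p) / p)) :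
    ∀ f : ℝ,
      condRisk C θ p (1 / Real.sqrt C * Real.sqrt (p / (1 - p))) ≤ condRisk C θ p f := by
  intro f
  obtain ⟨hp₀, hp₁⟩ := hp
  have hs : 0 < √C := sqrt_pos.mpr hC
  set t := 1 / √C * √(p / (1 - p)) with ht_def
  have hr : 1 ≤ √(p / (1 - p)) := one_le_sqrt.mpr (by rw [le_div_iff₀ (by linarith)]; linarith)
  have ht : 1 / √C ≤ t := le_mul_of_one_le_right (by positivity) hr
  have hopt : (1 - p) * C * t ^ 2 = p := by
    rw [mul_pow, div_pow, sq_sqrt hC.le, sq_sqrt (div_nonneg (by linarith) (by linarith))]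
    field_simp
  have hinv : 1 / t = √C * √((1 - p) / p) := by
    rw [ht_def, one_div_mul_eq_div, one_div_div, ← inv_div (1 - p), sqrt_inv, div_inv_eq_mul]
  have hθt : θ * √C ≤ dwdLoss C t := by
    rw [dwdLoss_of_one_div_sqrt_le hC ht, hinv, mul_comm θ]
    exact mul_le_mul_of_nonneg_left hθp hs.le
  exact condRisk_le_of_dwdRisk_le (by linarith) hp₁.le hθt
    (hθt.trans (dwdLoss_le_dwdLoss_neg hC ht))
    (dwdRisk_le_of_sq_eq hC (by linarith) hp₁.le ht hopt f)

theorem condRisk_minimizer_explicit (C θ p : ℝ) (hC : 0 < C) (hθ : θ ∈ Set.Icc (0 : ℝ) 1)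
    (hp : p ∈ Set.Ioo (1 / 2 : ℝ) 1) (hθp : θ ≤ Real.sqrt ((1 - p) / p)) :
    ∀ f : ℝ,
      condRisk C θ p (1 / Real.sqrt C * Real.sqrt (p / (1 - p))) ≤ condRisk C θ p f :=
  condRisk_minimizer_explicit_general C θ p hC hp hθp
end

section
/- Let C > 0, θ ∈ (0,1], and p ∈ (0,1). Then every global minimizer f* of the conditional risk R satisfies −1/(θ√C) ≤ f* ≤ 1/(θ√C). -/
/-!
Put `B = 1/(θ√C)`. The FLAME loss vanishes on `[B, ∞)` and is the strictly decreasing affine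
function `(2 - θ)√C - C u` on `(-∞, 0]`. So if `f > B`, moving `f` down to `B` leaves the term
`p·L(f)` at zero while strictly decreasing `(1-p)·L(-f)`; hence `f ≤ B` at a minimizer. The lower
bound is the same argument after the symmetry `R_p(-f) = R_{1-p}(f)`.
-/

open Real

lemma flameLoss_eq_zero_of_le {C θ u : ℝ} (hC : 0 < C) (hθ0 : 0 < θ)
    (hu : 1 / (θ * √C) ≤ u) : flameLoss C θ u = 0 := by
  have hs : 0 < √C := sqrt_pos.2 hC
  have hsC : √C * √C = C := mul_self_sqrt hC.le
  have h1 : 1 ≤ u * (θ * √C) := (div_le_iff₀ (by positivity)).mp hu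
  unfold flameLoss dwdLoss
  refine max_eq_right ?_
  split_ifs with h
  · -- `u√C ≥ 1/θ` and `θ + 1/θ ≥ 2`
    nlinarith [sq_nonneg (θ - 1), mul_le_mul_of_nonneg_right h1 hs.le, mul_pos hθ0 hs]
  · have hu0 : 0 < u := lt_trans (by positivity) (not_le.mp h)
    rw [sub_nonpos, div_le_iff₀ hu0]
    nlinarith

lemma flameLoss_of_nonpos {C θ u : ℝ} (hC : 0 ≤ C) (hθ : θ ≤ 2) (hu : u ≤ 0) :
    flameLoss C θ u = (2 - θ) * √C - C * u := by
  have hdwd : dwdLoss C u = 2 * √C - C * u := if_pos (hu.trans (by positivity))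
  have hnonneg : 0 ≤ 2 * √C - C * u - θ * √C := by
    nlinarith [sqrt_nonneg C, mul_nonpos_of_nonneg_of_nonpos hC hu]
  rw [flameLoss, hdwd, max_eq_left hnonneg]
  ring

lemma flameLoss_lt_of_lt_of_nonpos {C θ u v : ℝ} (hC : 0 < C) (hθ : θ ≤ 2) (huv : u < v)
    (hv : v ≤ 0) : flameLoss C θ v < flameLoss C θ u := by
  rw [flameLoss_of_nonpos hC.le hθ hv, flameLoss_of_nonpos hC.le hθ (huv.le.trans hv)]
  nlinarith

lemma condRisk_neg (C θ p f : ℝ) : condRisk C θ p (-f) = condRisk C θ (1 - p) f := by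
  rw [condRisk, condRisk, neg_neg]
  ring

lemma le_of_forall_condRisk_le {C θ p fstar : ℝ} (hC : 0 < C) (hθ0 : 0 < θ) (hθ2 : θ ≤ 2)
    (hp : p < 1) (hmin : ∀ f, condRisk C θ p fstar ≤ condRisk C θ p f) :
    fstar ≤ 1 / (θ * √C) := by
  set B := 1 / (θ * √C)
  by_contra! hB
  have hB0 : 0 < B := by positivity
  have hloss : flameLoss C θ (-B) < flameLoss C θ (-fstar) :=
    flameLoss_lt_of_lt_of_nonpos hC hθ2 (by linarith) (by linarith)
  have hrisk : condRisk C θ p B < condRisk C θ p fstar := by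
    rw [condRisk, condRisk, flameLoss_eq_zero_of_le hC hθ0 le_rfl,
      flameLoss_eq_zero_of_le hC hθ0 hB.le]
    nlinarith
  exact (hmin B).not_gt hrisk

theorem condRisk_minimizer_bounded (C θ p : ℝ) (hC : 0 < C) (hθ : θ ∈ Set.Ioc (0 : ℝ) 1)
    (hp : p ∈ Set.Ioo (0 : ℝ) 1) :
    ∀ fstar : ℝ, (∀ f : ℝ, condRisk C θ p fstar ≤ condRisk C θ p f) →
      -(1 / (θ * Real.sqrt C)) ≤ fstar ∧ fstar ≤ 1 / (θ * Real.sqrt C) := by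
  intro fstar hmin
  have hmin_neg : ∀ f, condRisk C θ (1 - p) (-fstar) ≤ condRisk C θ (1 - p) f := fun f => by
    simpa only [condRisk_neg, sub_sub_cancel, neg_neg] using hmin (-f)
  have hθ2 : θ ≤ 2 := by linarith [hθ.2]
  have hlower := le_of_forall_condRisk_le hC hθ.1 hθ2 (by linarith [hp.1]) hmin_neg
  exact ⟨by linarith, le_of_forall_condRisk_le hC hθ.1 hθ2 hp.2 hmin⟩
end

section
/- (Stationarity characterization of FLAME under extreme imbalance) Let d ∈ ℕ, ν a Borel probability measure on ℝ^d, constants C, λ, θ, n₊, n₋, n° > 0, and points x₁,…,x_{n₊} ∈ ℝ^d with mean x̄₊. Define l_F : ℝ^d × ℝ → ℝ by l_F(ω,β) = (n₊+n₋)⁻¹·[ Σ_{i=1}^{n₊} ( (2−θ)√C − C(⟨xᵢ,ω⟩+β) ) + n°·∫ ( −(⟨x,ω⟩+β)⁻¹ − θ√C ) dν(x) ] + (λ/2)‖ω‖². Suppose that at (ω*, β*): (i) the functions x ↦ (⟨x,ω*⟩+β*)⁻² and x ↦ (⟨x,ω*⟩+β*)⁻²·x are ν-integrable, and the map (ω,β)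 ↦ ∫ −(⟨x,ω⟩+β)⁻¹ dν(x) has Fréchet derivative (h,t) ↦ ∫ (⟨x,ω*⟩+β*)⁻²·(⟨x,h⟩+t) dν(x) at (ω*,β*) (differentiation under the integral sign); and (ii) (ω*,β*) is a critical point of l_F (its Fréchet derivative vanishes). Then ∫ (⟨x,ω*⟩+β*)⁻² dν(x) = C·n₊/n°, and ω* = (C·n₊/((n₊+n₋)·λ)) · [ x̄₊ − ( ∫ (⟨x,ω*⟩+β*)⁻²·x dν(x) ) / ( ∫ (⟨x,ω*⟩+β*)⁻² dν(x) ) ]. Equivalently, with m = n₋/n₊, the prefactor is C/((1+m)λ). -/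
/-!
At a critical point the FLAME loss coincides, near `(ω*, β*)`, with the smooth surrogate in which
`∫ (-(⟪x, ω⟫ + β)⁻¹ - θ√C) dν` is replaced by `∫ -(⟪x, ω⟫ + β)⁻¹ dν - θ√C`. Indeed the difference of
the two is `0` where the integrand is integrable and `θ√C` where it is not (the Bochner integral
is then `0`), and both integrals are continuous at the critical point, where the integrand is
integrable because its square is. Differentiating the surrogate in the direction `(0, 1)` gives
`∫ (⟪x, ω*⟫ + β*)⁻² dν = C n₊ / n°`; differentiating in the directions `(h, 0)` identifies the
gradient in `ω`, and setting it to zero solves for `ω*`.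
-/

open MeasureTheory Filter Topology
open scoped RealInnerProductSpace

section Integrals

variable {α : Type*} [MeasurableSpace α] {μ : Measure α}

theorem Integrable.of_sq [IsFiniteMeasure μ] {f : α → ℝ} (hf : AEStronglyMeasurable f μ)
    (hsq : Integrable (fun a => f a ^ 2) μ) : Integrable f μ :=
  ((memLp_two_iff_integrable_sq hf).mpr hsq).integrable one_le_two

variable [IsProbabilityMeasure μ]

theorem integral_sub_const_of_integrable {f : α → ℝ} (hf : Integrable f μ) (c : ℝ) :
    ∫ a, (f a - c) ∂μ = ∫ a, f a ∂μ - c := by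
  rw [integral_sub hf (integrable_const c), integral_const, probReal_univ, one_smul]

/-- The defect `∫ (f - c) - ∫ f` is `-c` where `f` is integrable and `0` where it is not, so
continuity of both integrals propagates integrability to a neighbourhood. -/
theorem eventually_integral_sub_const {X : Type*} [TopologicalSpace X] {F : X → α → ℝ} {x₀ : X}
    {c : ℝ} (hc : c ≠ 0) (hsub : ContinuousAt (fun x => ∫ a, (F x a - c) ∂μ) x₀)
    (hint : ContinuousAt (fun x => ∫ a, F x a ∂μ) x₀) (h₀ : Integrable (F x₀) μ) :
    ∀ᶠ x in 𝓝 x₀, ∫ a, (F x a - c) ∂μ = ∫ a, F x a ∂μ - c := by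
  have hne : ∀ᶠ x in 𝓝 x₀, ∫ a, (F x a - c) ∂μ - ∫ a, F x a ∂μ ≠ 0 := by
    refine (hsub.sub hint).eventually_ne ?_
    simpa [integral_sub_const_of_integrable h₀] using hc
  filter_upwards [hne] with x hx
  by_cases hx_int : Integrable (F x) μ
  · exact integral_sub_const_of_integrable hx_int c
  · have hx_sub_int : ¬Integrable (fun a => F x a - c) μ := by
      simpa only [sub_eq_add_neg] using mt integrable_add_const_iff.mp hx_int
    simp [integral_undef hx_int, integral_undef hx_sub_int] at hx

end Integrals

theorem ContinuousAt.of_eq_mul_add_mul_add {X : Type*} [TopologicalSpace X] {F f g r : X → ℝ}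
    {x₀ : X} {a n : ℝ} (hF : ContinuousAt F x₀) (hFeq : ∀ x, F x = a * (g x + n * f x) + r x)
    (ha : a ≠ 0) (hn : n ≠ 0) (hg : ContinuousAt g x₀) (hr : ContinuousAt r x₀) :
    ContinuousAt f x₀ := by
  refine ((((hF.sub hr).div_const a).sub hg).div_const n).congr (Eventually.of_forall fun x => ?_)
  simp only [Pi.sub_apply, hFeq]
  field_simp
  ring

variable {E : Type*} [NormedAddCommGroup E] [InnerProductSpace ℝ E]

theorem integral_mul_inner_add [MeasurableSpace E] [CompleteSpace E] {μ : Measure E}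
    {w : E → ℝ} (hw : Integrable w μ) (hwx : Integrable (fun x => w x • x) μ) (h : E) (t : ℝ) :
    ∫ x, w x * (⟪x, h⟫ + t) ∂μ = ⟪∫ x, w x • x ∂μ, h⟫ + (∫ x, w x ∂μ) * t := by
  have hinner : ∀ x, w x * ⟪x, h⟫ = ⟪h, w x • x⟫ := fun x => by
    rw [real_inner_smul_right, real_inner_comm]
  simp only [mul_add, hinner]
  rw [integral_add (hwx.const_inner h) (hw.mul_const t), integral_inner hwx, real_inner_comm,
    integral_mul_const]

theorem flame_stationarity_equation {ι : Type*} [Fintype ι] (x : ι → E) {G : E × ℝ → ℝ}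
    {D : E × ℝ →L[ℝ] ℝ} {p₀ : E × ℝ} (hG : HasFDerivAt G D p₀) {f : E × ℝ → ℝ}
    (hf : HasFDerivAt f (0 : E × ℝ →L[ℝ] ℝ) p₀) {a b k n c lam : ℝ}
    (hfeq : f =ᶠ[𝓝 p₀] fun p =>
      a * (∑ i, (b - k * (⟪x i, p.1⟫ + p.2)) + n * (G p - c)) + lam / 2 * ‖p.1‖ ^ 2)
    (h : E) (t : ℝ) :
    a * (n * D (h, t) - k * (⟪∑ i, x i, h⟫ + Fintype.card ι * t)) + lam * ⟪p₀.1, h⟫ = 0 := by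
  have hsum := HasFDerivAt.fun_sum (u := Finset.univ) fun i _ => (hasFDerivAt_const b p₀).sub
    (((innerSL ℝ (x i)).comp (.fst ℝ E ℝ) + .snd ℝ E ℝ).hasFDerivAt.const_mul k)
  have hderiv := ((hsum.add ((hG.sub_const c).const_mul n)).const_mul a).add
    ((hasFDerivAt_fst (p := p₀)).norm_sq.const_mul (lam / 2))
  have hzero := congrArg (· (h, t)) ((hderiv.congr_of_eventuallyEq hfeq).unique hf)
  simp only [smul_add, zero_sub, Finset.sum_add_distrib, Finset.sum_neg_distrib, Finset.sum_const,
    Finset.card_univ, smul_neg, add_apply, neg_apply, smul_apply, ContinuousLinearMap.coe_snd',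
    smul_eq_mul, nsmul_eq_mul, sum_apply, ContinuousLinearMap.comp_apply,
    ContinuousLinearMap.coe_fst', coe_innerSL_apply, Nat.cast_ofNat, zero_apply,
    ← Finset.mul_sum] at hzero
  rw [sum_inner]
  linear_combination hzero

theorem flame_stationarity_solution {M k n lam N I : ℝ} {S J ω : E} (hM : M ≠ 0) (hk : k ≠ 0)
    (hn : n ≠ 0) (hlam : lam ≠ 0) (hN : N ≠ 0)
    (hstat : ∀ h t, M⁻¹ * (n * (⟪J, h⟫ + I * t) - k * (⟪S, h⟫ + N * t)) + lam * ⟪ω, h⟫ = 0) :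
    I = k * N / n ∧ ω = (k * N / (M * lam)) • (N⁻¹ • S - I⁻¹ • J) := by
  have hI : I = k * N / n := by
    have h01 := hstat 0 1
    simp only [inner_zero_right, zero_add, mul_one, mul_zero, add_zero, mul_eq_zero,
      inv_eq_zero, hM, false_or] at h01
    field_simp
    linear_combination h01
  have hω : lam • ω = M⁻¹ • (k • S - n • J) := by
    refine ext_inner_right ℝ fun h => ?_
    simp only [real_inner_smul_left, inner_sub_left]
    linear_combination hstat h 0
  refine ⟨hI, ?_⟩
  rw [← inv_smul_smul₀ hlam ω, hω, hI]
  match_scalars <;> field_simp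

theorem flame_stationarity_under_imbalance (d : ℕ)
    (ν : Measure (EuclideanSpace ℝ (Fin d))) [IsProbabilityMeasure ν]
    (C lam θ nm nzero : ℝ) (np : ℕ)
    (hC : 0 < C) (hlam : 0 < lam) (hθ : 0 < θ) (hnp : 0 < np)
    (hnm : 0 < nm) (hnzero : 0 < nzero)
    (x : Fin np → EuclideanSpace ℝ (Fin d))
    (xbarPlus : EuclideanSpace ℝ (Fin d))
    (hxbar : xbarPlus = ((np : ℝ))⁻¹ • ∑ i, x i)
    (ωstar : EuclideanSpace ℝ (Fin d)) (βstar : ℝ)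
    (lF : EuclideanSpace ℝ (Fin d) × ℝ → ℝ)
    (hlF : ∀ (ω : EuclideanSpace ℝ (Fin d)) (β : ℝ),
      lF (ω, β) = ((np : ℝ) + nm)⁻¹ *
          ((∑ i, ((2 - θ) * Real.sqrt C - C * (⟪x i, ω⟫ + β))) +
            nzero * ∫ x', (-(⟪x', ω⟫ + β)⁻¹ - θ * Real.sqrt C) ∂ν) +
        lam / 2 * ‖ω‖ ^ 2)
    -- (i) integrability and differentiation under the integral sign
    (hInt1 : Integrable (fun x' => (⟪x', ωstar⟫ + βstar)⁻¹ ^ 2) ν)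
    (hInt2 : Integrable (fun x' => ((⟪x', ωstar⟫ + βstar)⁻¹ ^ 2) • x') ν)
    (D : (EuclideanSpace ℝ (Fin d) × ℝ) →L[ℝ] ℝ)
    (hD : ∀ (h : EuclideanSpace ℝ (Fin d)) (t : ℝ),
      D (h, t) = ∫ x', (⟪x', ωstar⟫ + βstar)⁻¹ ^ 2 * (⟪x', h⟫ + t) ∂ν)
    (hDeriv : HasFDerivAt
      (fun p : EuclideanSpace ℝ (Fin d) × ℝ => ∫ x', -(⟪x', p.1⟫ + p.2)⁻¹ ∂ν)
      D (ωstar, βstar))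
    -- (ii) criticality of (ωstar, βstar)
    (hCrit : HasFDerivAt lF (0 : (EuclideanSpace ℝ (Fin d) × ℝ) →L[ℝ] ℝ) (ωstar, βstar)) :
    (∫ x', (⟪x', ωstar⟫ + βstar)⁻¹ ^ 2 ∂ν) = C * np / nzero ∧
    ωstar = (C * np / (((np : ℝ) + nm) * lam)) •
      (xbarPlus - (∫ x', (⟪x', ωstar⟫ + βstar)⁻¹ ^ 2 ∂ν)⁻¹ •
        ∫ x', ((⟪x', ωstar⟫ + βstar)⁻¹ ^ 2) • x' ∂ν) := by
  have hM : (np : ℝ) + nm ≠ 0 := by positivity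
  have hG₀ : Integrable (fun x' => -(⟪x', ωstar⟫ + βstar)⁻¹) ν :=
    Integrable.of_sq (by fun_prop) (by simpa using hInt1)
  have hcont : ContinuousAt (fun p : EuclideanSpace ℝ (Fin d) × ℝ =>
      ∫ x', (-(⟪x', p.1⟫ + p.2)⁻¹ - θ * Real.sqrt C) ∂ν) (ωstar, βstar) :=
    hCrit.continuousAt.of_eq_mul_add_mul_add (fun p => hlF p.1 p.2) (inv_ne_zero hM)
      hnzero.ne' (by fun_prop) (by fun_prop)
  have hsplit := eventually_integral_sub_const (by positivity) hcont hDeriv.continuousAt hG₀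
  have hstat := flame_stationarity_equation x hDeriv hCrit (by
    filter_upwards [hsplit] with p hp
    rw [← hp]
    exact hlF p.1 p.2)
  simp only [hD, integral_mul_inner_add hInt1 hInt2, Fintype.card_fin] at hstat
  rw [hxbar]
  exact flame_stationarity_solution hM hC.ne' hnzero.ne' hlam.ne' (by positivity) hstat
end

section
/- (HDLSS geometric optimization, DWD-like regime) Let n₊, n₋, S > 0 with n₊ ≤ n₋, and let k ≥ 0 satisfy k·S < 1 + √(n₊/n₋). Consider minimizing g(a,b) = n₊·max(1/a − k, 0) + n₋·max(1/b − k, 0) over the feasible set {(a,b) ∈ ℝ² : a > 0, b > 0, a + b = S}. Then (a*, b*) = ( S·√n₊/(√n₊+√n₋), S·√n₋/(√n₊+√n₋) ) is the unique global minimizer; it satisfies a*/b* = √(n₊/n₋), and the minimum value equals (√n₊+√n₋)²/S − (n₊+n₋)·k. -/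
/-- The total FLAME loss in the HDLSS geometric representation, as a function of the
distances `a` and `b` of the two class simplices to the separating hyperplane,
with `k = θ√C`. -/
noncomputable def hdlssLoss (np nm k a b : ℝ) : ℝ :=
  np * max (1 / a - k) 0 + nm * max (1 / b - k) 0

/-!
Write `n₊ = p²`, `n₋ = m²`. Dropping the truncations only lowers the loss, to
`p²/a + m²/b - (p² + m²) k`, and on `a + b = S` the two-term Cauchy–Schwarz (Sedrakyan)
inequality `p²/a + m²/b ≥ (p + m)²/S` holds with equality exactly when `a : b = p : m`.
In the regime `k S < 1 + p/m` with `p ≤ m` neither truncation is active at that point,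
so it attains the bound, and any other feasible point misses it.
-/

section TwoTermSedrakyan

variable {p m a b : ℝ}

theorem sq_div_add_sq_div_eq (ha : 0 < a) (hb : 0 < b) :
    p ^ 2 / a + m ^ 2 / b
      = (p + m) ^ 2 / (a + b) + (p * b - m * a) ^ 2 / (a * b * (a + b)) := by
  have hab : 0 < a + b := add_pos ha hb
  field_simp
  ring

theorem add_sq_div_le_sq_div_add_sq_div (ha : 0 < a) (hb : 0 < b) :
    (p + m) ^ 2 / (a + b) ≤ p ^ 2 / a + m ^ 2 / b := by
  rw [sq_div_add_sq_div_eq ha hb]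
  have : 0 ≤ (p * b - m * a) ^ 2 / (a * b * (a + b)) := by positivity
  linarith

theorem mul_eq_mul_of_sq_div_add_sq_div_eq (ha : 0 < a) (hb : 0 < b)
    (h : p ^ 2 / a + m ^ 2 / b = (p + m) ^ 2 / (a + b)) : p * b = m * a := by
  rw [sq_div_add_sq_div_eq ha hb, add_eq_left, div_eq_zero_iff] at h
  rcases h with h | h
  · exact sub_eq_zero.mp (pow_eq_zero_iff two_ne_zero |>.mp h)
  · exact absurd h (by positivity)

end TwoTermSedrakyan

section Loss

variable {np nm p m k a b S : ℝ}

theorem div_add_div_sub_le_hdlssLoss (hnp : 0 ≤ np) (hnm : 0 ≤ nm) :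
    np / a + nm / b - (np + nm) * k ≤ hdlssLoss np nm k a b := by
  have hpos : np * (1 / a - k) ≤ np * max (1 / a - k) 0 :=
    mul_le_mul_of_nonneg_left (le_max_left _ _) hnp
  have hneg : nm * (1 / b - k) ≤ nm * max (1 / b - k) 0 :=
    mul_le_mul_of_nonneg_left (le_max_left _ _) hnm
  rw [hdlssLoss]
  linarith [show np / a + nm / b - (np + nm) * k = np * (1 / a - k) + nm * (1 / b - k) by ring]

theorem hdlssLoss_eq_of_le_inv (ha : k ≤ 1 / a) (hb : k ≤ 1 / b) :
    hdlssLoss np nm k a b = np / a + nm / b - (np + nm) * k := by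
  rw [hdlssLoss, max_eq_left (sub_nonneg.mpr ha), max_eq_left (sub_nonneg.mpr hb)]
  ring

theorem hdlssLoss_sq_ge (ha : 0 < a) (hb : 0 < b) :
    (p + m) ^ 2 / (a + b) - (p ^ 2 + m ^ 2) * k ≤ hdlssLoss (p ^ 2) (m ^ 2) k a b := by
  have htrunc := div_add_div_sub_le_hdlssLoss (a := a) (b := b) (k := k) (sq_nonneg p) (sq_nonneg m)
  linarith [add_sq_div_le_sq_div_add_sq_div (p := p) (m := m) ha hb]

theorem mul_eq_mul_of_hdlssLoss_sq_eq (ha : 0 < a) (hb : 0 < b)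
    (h : hdlssLoss (p ^ 2) (m ^ 2) k a b = (p + m) ^ 2 / (a + b) - (p ^ 2 + m ^ 2) * k) :
    p * b = m * a := by
  have htrunc := div_add_div_sub_le_hdlssLoss (a := a) (b := b) (k := k) (sq_nonneg p) (sq_nonneg m)
  refine mul_eq_mul_of_sq_div_add_sq_div_eq ha hb (le_antisymm ?_ ?_)
  · linarith
  · exact add_sq_div_le_sq_div_add_sq_div ha hb

theorem hdlssLoss_sq_proportional_eq (hp : 0 < p) (hm : 0 < m) (hS : 0 < S)
    (hkp : k * S * p ≤ p + m) (hkm : k * S * m ≤ p + m) :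
    hdlssLoss (p ^ 2) (m ^ 2) k (S * p / (p + m)) (S * m / (p + m))
      = (p + m) ^ 2 / S - (p ^ 2 + m ^ 2) * k := by
  have hpm : 0 < p + m := add_pos hp hm
  rw [hdlssLoss_eq_of_le_inv]
  · field_simp
  all_goals
    rw [one_div_div, le_div_iff₀ (by positivity)]
    linarith

theorem eq_proportional_of_mul_eq_mul (hpm : 0 < p + m) (hab : a + b = S)
    (h : p * b = m * a) : a = S * p / (p + m) ∧ b = S * m / (p + m) := by
  constructor
  · rw [eq_div_iff hpm.ne']
    linear_combination p * hab - h
  · rw [eq_div_iff hpm.ne']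
    linear_combination m * hab + h

end Loss

theorem hdlss_dwd_like_regime (np nm S k : ℝ)
    (hnp : 0 < np) (hnm : 0 < nm) (hS : 0 < S) (hle : np ≤ nm)
    (hk : 0 ≤ k) (hkS : k * S < 1 + Real.sqrt (np / nm)) :
    let astar := S * Real.sqrt np / (Real.sqrt np + Real.sqrt nm)
    let bstar := S * Real.sqrt nm / (Real.sqrt np + Real.sqrt nm)
    (0 < astar ∧ 0 < bstar ∧ astar + bstar = S) ∧
    (∀ a b : ℝ, 0 < a → 0 < b → a + b = S →
      hdlssLoss np nm k astar bstar ≤ hdlssLoss np nm k a b ∧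
      (hdlssLoss np nm k a b = hdlssLoss np nm k astar bstar → a = astar ∧ b = bstar)) ∧
    astar / bstar = Real.sqrt (np / nm) ∧
    hdlssLoss np nm k astar bstar = (Real.sqrt np + Real.sqrt nm) ^ 2 / S - (np + nm) * k := by
  obtain ⟨p, hp, rfl⟩ : ∃ p, 0 < p ∧ np = p ^ 2 :=
    ⟨√np, Real.sqrt_pos.mpr hnp, (Real.sq_sqrt hnp.le).symm⟩
  obtain ⟨m, hm, rfl⟩ : ∃ m, 0 < m ∧ nm = m ^ 2 :=
    ⟨√nm, Real.sqrt_pos.mpr hnm, (Real.sq_sqrt hnm.le).symm⟩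
  have hpm : 0 < p + m := add_pos hp hm
  have hsqrt : √(p ^ 2 / m ^ 2) = p / m := by rw [← div_pow, Real.sqrt_sq (by positivity)]
  simp only [Real.sqrt_sq hp.le, Real.sqrt_sq hm.le, hsqrt] at hkS ⊢
  have hkm : k * S * m ≤ p + m := by
    have := mul_lt_mul_of_pos_right hkS hm
    rw [add_mul, div_mul_cancel₀ p hm.ne', one_mul] at this
    linarith
  have hkp : k * S * p ≤ p + m :=
    (mul_le_mul_of_nonneg_left ((pow_le_pow_iff_left₀ hp.le hm.le two_ne_zero).mp hle) (mul_nonneg hk hS.le)).trans hkm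
  have hopt := hdlssLoss_sq_proportional_eq hp hm hS hkp hkm
  refine ⟨⟨by positivity, by positivity, by field_simp⟩, fun a b ha hb hab => ⟨?_, fun h => ?_⟩,
    by field_simp, hopt⟩
  · rw [hopt, ← hab]
    exact hdlssLoss_sq_ge ha hb
  · rw [hopt, ← hab] at h
    exact eq_proportional_of_mul_eq_mul hpm hab (mul_eq_mul_of_hdlssLoss_sq_eq ha hb h)
end

section
/- (HDLSS geometric optimization, intermediate regime) Let n₊, n₋, S > 0 with n₊ ≤ n₋, and let k > 0 satisfy 1 + √(n₊/n₋) ≤ k·S < 2. Consider minimizing g(a,b) = n₊·max(1/a − k, 0) + n₋·max(1/b − k, 0) over the feasible set {(a,b) ∈ ℝ² : a > 0, b > 0, a + b = S}. Then (a*, b*) = (S − 1/k, 1/k) is a global minimizer, and the minimum value equals n₊·( 1/(S − 1/k) − k ). -/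
lemma mul_sq_le_of_sqrt_div_le {p q x : ℝ} (hq : 0 < q) (h : √(p / q) ≤ x) :
    p ≤ q * x ^ 2 := by
  obtain ⟨-, hpq⟩ := Real.sqrt_le_iff.mp h
  rwa [div_le_iff₀ hq, mul_comm] at hpq

lemma div_add_div_le_of_mul_sq_le {p q s t a b : ℝ} (hp : 0 ≤ p) (hq : 0 ≤ q)
    (hs : 0 < s) (hb : 0 < b) (hsa : s ≤ a) (hbt : b ≤ t) (hsum : a + b = s + t)
    (hpq : p * t ^ 2 ≤ q * s ^ 2) :
    p / s + q / t ≤ p / a + q / b := by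
  have ha : 0 < a := hs.trans_le hsa
  have ht : 0 < t := hb.trans_le hbt
  have hcross : p * b * t ≤ q * a * s :=
    calc p * b * t ≤ p * t * t := by gcongr
      _ = p * t ^ 2 := by ring
      _ ≤ q * s ^ 2 := hpq
      _ = q * s * s := by ring
      _ ≤ q * a * s := by gcongr
  have hdiff : p / a + q / b - (p / s + q / t) =
      (a - s) * (q * a * s - p * b * t) / (a * b * s * t) := by
    obtain rfl : t = a + b - s := by linarith
    field_simp
    ring
  have hnonneg : 0 ≤ (a - s) * (q * a * s - p * b * t) / (a * b * s * t) := by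
    apply div_nonneg
    · exact mul_nonneg (by linarith) (by linarith)
    · positivity
  linarith

lemma max_one_div_sub_le_of_le {k x y : ℝ} (hx : 0 < x) (hxy : x ≤ y) :
    max (1 / y - k) 0 ≤ max (1 / x - k) 0 :=
  max_le_max_right 0 (sub_le_sub_right (one_div_le_one_div_of_le hx hxy) k)

lemma max_one_div_sub_eq_of_lt_one_div {k x : ℝ} (hx : 0 < x) (hxk : x < 1 / k) :
    max (1 / x - k) 0 = 1 / x - k := by
  have hk : 0 < k := one_div_pos.mp (hx.trans hxk)
  exact max_eq_left (sub_nonneg.mpr ((le_one_div hx hk).mp hxk.le))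

lemma hdlssLoss_one_div (np nm k s : ℝ) :
    hdlssLoss np nm k s (1 / k) = np * max (1 / s - k) 0 := by
  simp [hdlssLoss]

theorem hdlssLoss_one_div_le {np nm k s a b : ℝ} (hnp : 0 ≤ np) (hle : np ≤ nm) (hs : 0 < s)
    (hpq : np ≤ nm * (k * s) ^ 2) (ha : 0 < a) (hb : 0 < b) (hab : a + b = s + 1 / k) :
    hdlssLoss np nm k s (1 / k) ≤ hdlssLoss np nm k a b := by
  rw [hdlssLoss_one_div, hdlssLoss]
  have hnm : 0 ≤ nm := hnp.trans hle
  have hpos_a := mul_nonneg hnp (le_max_right (1 / a - k) 0)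
  have hpos_b := mul_nonneg hnm (le_max_right (1 / b - k) 0)
  rcases le_or_gt (1 / k) b with hkb | hbk
  · have hmono := max_one_div_sub_le_of_le (k := k) ha (by linarith : a ≤ s)
    linarith [mul_le_mul_of_nonneg_left hmono hnp]
  rcases le_or_gt (1 / k) a with hka | hak
  · have hmono := max_one_div_sub_le_of_le (k := k) hb (by linarith : b ≤ s)
    linarith [mul_le_mul_of_nonneg_right hle (le_max_right (1 / s - k) 0),
      mul_le_mul_of_nonneg_left hmono hnm]
  have hk : 0 < k := one_div_pos.mp (ha.trans hak)
  have hsa : s < a := by linarith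
  have hslope : np * (1 / k) ^ 2 ≤ nm * s ^ 2 :=
    calc np * (1 / k) ^ 2 ≤ nm * (k * s) ^ 2 * (1 / k) ^ 2 := by gcongr
      _ = nm * s ^ 2 := by field_simp
  have hconvex := div_add_div_le_of_mul_sq_le hnp hnm hs hb hsa.le hbk.le hab hslope
  rw [max_one_div_sub_eq_of_lt_one_div hs (hsa.trans hak),
    max_one_div_sub_eq_of_lt_one_div ha hak, max_one_div_sub_eq_of_lt_one_div hb hbk]
  rw [div_div_eq_mul_div, div_one] at hconvex
  linear_combination hconvex

theorem hdlss_intermediate_regime_general (np nm S k : ℝ)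
    (hnp : 0 < np) (hnm : 0 < nm) (hle : np ≤ nm)
    (hk : 0 < k) (hkS₁ : 1 + Real.sqrt (np / nm) ≤ k * S) (hkS₂ : k * S < 2) :
    (∀ a b : ℝ, 0 < a → 0 < b → a + b = S →
      hdlssLoss np nm k (S - 1 / k) (1 / k) ≤ hdlssLoss np nm k a b) ∧
    hdlssLoss np nm k (S - 1 / k) (1 / k) = np * (1 / (S - 1 / k) - k) := by
  set s := S - 1 / k with hs_def
  have hks : k * s = k * S - 1 := by rw [hs_def]; field_simp
  have hs : 0 < s := by
    refine pos_of_mul_pos_right ?_ hk.le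
    linarith [Real.sqrt_pos.mpr (div_pos hnp hnm)]
  have hsk : s < 1 / k := by rw [lt_div_iff₀ hk, mul_comm]; linarith
  have hpq : np ≤ nm * (k * s) ^ 2 := mul_sq_le_of_sqrt_div_le hnm (by linarith)
  have hval : hdlssLoss np nm k s (1 / k) = np * (1 / s - k) := by
    rw [hdlssLoss_one_div, max_one_div_sub_eq_of_lt_one_div hs hsk]
  refine ⟨fun a b ha hb hab => ?_, hval⟩
  exact hdlssLoss_one_div_le hnp.le hle hs hpq ha hb (by rw [hab, hs_def]; ring)

theorem hdlss_intermediate_regime (np nm S k : ℝ)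
    (hnp : 0 < np) (hnm : 0 < nm) (hS : 0 < S) (hle : np ≤ nm)
    (hk : 0 < k) (hkS₁ : 1 + Real.sqrt (np / nm) ≤ k * S) (hkS₂ : k * S < 2) :
    (∀ a b : ℝ, 0 < a → 0 < b → a + b = S →
      hdlssLoss np nm k (S - 1 / k) (1 / k) ≤ hdlssLoss np nm k a b) ∧
    hdlssLoss np nm k (S - 1 / k) (1 / k) = np * (1 / (S - 1 / k) - k) :=
  hdlss_intermediate_regime_general np nm S k hnp hnm hle hk hkS₁ hkS₂
end

section
/- (Key inequality for sure classification of the positive class, Theorem on HDLSS asymptotics) Let n₊, n₋, d, C, θ > 0 be real numbers and σ, τ, μ ≥ 0. Set ν = √(μ² + σ²/n₊ + τ²/n₋) and T = ( 1/(2θ√(dC)) + √( 1/(4θ²dC) + σ²/n₊ ) )² − σ²/n₊. If μ² > T − τ²/n₋, then ν > 0 and √d·(μ² + τ²/n₋)/ν > 1/(θ√C). -/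
/-!
With `x = 1 / (2θ√(dC))`, `s = σ²/n₊` and `a = μ² + τ²/n₋` we have `ν² = a + s` and
`T = 2x(x + √(x² + s))`, the larger root of `a² - 4x²a - 4x²s`. So the hypothesis `a > T` gives
`a² > 4x²ν²`, i.e. `a > 2xν = ν / (θ√(dC))`, which rescales to `√d · a / ν > 1 / (θ√C)`.
-/

open Real

lemma add_sqrt_sq_sub_eq_two_mul {x s : ℝ} (h : 0 ≤ x ^ 2 + s) :
    (x + √(x ^ 2 + s)) ^ 2 - s = 2 * x * (x + √(x ^ 2 + s)) := by
  nlinarith [sq_sqrt h]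

lemma two_mul_mul_sqrt_add_lt {x s a : ℝ} (hx : 0 < x) (hs : 0 ≤ s)
    (ha : 2 * x * (x + √(x ^ 2 + s)) < a) : 2 * x * √(a + s) < a := by
  set r := √(x ^ 2 + s)
  have hr0 : 0 ≤ r := sqrt_nonneg _
  have hr2 : r ^ 2 = x ^ 2 + s := sq_sqrt (by positivity)
  have ha0 : 0 < a := by nlinarith
  -- `a` lies beyond both roots `2x(x ± r)` of `a² - 4x²a - 4x²s`
  have hquad : (2 * x * √(a + s)) ^ 2 < a ^ 2 := by
    have hlow : 0 < a - 2 * x * (x - r) := by nlinarith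
    rw [mul_pow, sq_sqrt (by positivity)]
    nlinarith [mul_pos (sub_pos.2 ha) hlow]
  exact lt_of_pow_lt_pow_left₀ 2 ha0.le hquad

lemma one_div_lt_sqrt_mul_div {d C θ a ν : ℝ} (hd : 0 < d) (hC : 0 < C) (hθ : 0 < θ)
    (hν : 0 < ν) (h : 2 * (1 / (2 * θ * √(d * C))) * ν < a) :
    1 / (θ * √C) < √d * a / ν := by
  have hc : 0 < θ * √d * √C := by positivity
  have hscale : 2 * (1 / (2 * θ * √(d * C))) * ν = ν / (θ * √d * √C) := by
    rw [sqrt_mul hd.le]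
    field_simp
  rw [hscale, div_lt_iff₀ hc] at h
  rw [div_lt_div_iff₀ (by positivity) hν]
  linarith

theorem hdlss_sure_classification_positive_general (np nm d C θ σ τ μ : ℝ)
    (hnp : 0 < np) (hd : 0 < d) (hC : 0 < C) (hθ : 0 < θ)
    (ν : ℝ) (hν : ν = Real.sqrt (μ ^ 2 + σ ^ 2 / np + τ ^ 2 / nm))
    (T : ℝ)
    (hT : T = (1 / (2 * θ * Real.sqrt (d * C)) +
        Real.sqrt (1 / (4 * θ ^ 2 * d * C) + σ ^ 2 / np)) ^ 2 - σ ^ 2 / np)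
    (h : μ ^ 2 > T - τ ^ 2 / nm) :
    0 < ν ∧ Real.sqrt d * (μ ^ 2 + τ ^ 2 / nm) / ν > 1 / (θ * Real.sqrt C) := by
  have hx2 : (1 / (2 * θ * √(d * C))) ^ 2 = 1 / (4 * θ ^ 2 * d * C) := by
    rw [div_pow, mul_pow, mul_pow, sq_sqrt (by positivity)]
    ring
  have hx : 0 < 1 / (2 * θ * √(d * C)) := by positivity
  have hs : 0 ≤ σ ^ 2 / np := by positivity
  rw [← hx2, add_sqrt_sq_sub_eq_two_mul (by positivity)] at hT
  set x := 1 / (2 * θ * √(d * C))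
  set s := σ ^ 2 / np
  set a := μ ^ 2 + τ ^ 2 / nm
  have hroot : 2 * x * (x + √(x ^ 2 + s)) < a := by linarith
  have hν' : ν = √(a + s) := by rw [hν, add_right_comm]
  have hνpos : 0 < ν := by
    rw [hν']
    exact sqrt_pos.2 (by nlinarith [sqrt_nonneg (x ^ 2 + s)])
  refine ⟨hνpos, one_div_lt_sqrt_mul_div hd hC hθ hνpos ?_⟩
  rw [hν']
  exact two_mul_mul_sqrt_add_lt hx hs hroot

theorem hdlss_sure_classification_positive (np nm d C θ σ τ μ : ℝ)
    (hnp : 0 < np) (hnm : 0 < nm) (hd : 0 < d) (hC : 0 < C) (hθ : 0 < θ)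
    (hσ : 0 ≤ σ) (hτ : 0 ≤ τ) (hμ : 0 ≤ μ)
    (ν : ℝ) (hν : ν = Real.sqrt (μ ^ 2 + σ ^ 2 / np + τ ^ 2 / nm))
    (T : ℝ)
    (hT : T = (1 / (2 * θ * Real.sqrt (d * C)) +
        Real.sqrt (1 / (4 * θ ^ 2 * d * C) + σ ^ 2 / np)) ^ 2 - σ ^ 2 / np)
    (h : μ ^ 2 > T - τ ^ 2 / nm) :
    0 < ν ∧ Real.sqrt d * (μ ^ 2 + τ ^ 2 / nm) / ν > 1 / (θ * Real.sqrt C) :=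
  hdlss_sure_classification_positive_general np nm d C θ σ τ μ hnp hd hC hθ ν hν T hT h
end

section
/- (Key inequality for sure classification of the negative class, Theorem on HDLSS asymptotics) Let n₊, n₋, d, C, θ > 0 be real numbers and σ, τ, μ ≥ 0. Set ν = √(μ² + σ²/n₊ + τ²/n₋) and T = ( 1/(2θ√(dC)) + √( 1/(4θ²dC) + σ²/n₊ ) )² − σ²/n₊, and assume ν > 0. If τ²/n₋ < T, then √d·(τ²/n₋)/ν < 1/(θ√C). -/
/-!
Write `s = σ²/n₊`, `t = τ²/n₋` and `a = 1/(2θ√(dC))`, so that `1/(θ√C) = 2a√d` and the claim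
becomes `t < 2aν`. The threshold is `T = (a + r)² - s = 2a(a + r)` with `r = √(a² + s)`, and
`a + r` is the positive root of `x² - 2ax - s`. Since `ν² ≥ t + s`: if `ν ≥ a + r` then
`2aν ≥ T > t`; otherwise `ν` lies between the roots, so `t ≤ ν² - s < 2aν`.
-/

namespace Real

theorem add_sqrt_sq_add_sq_sub {a s : ℝ} (hs : 0 ≤ a ^ 2 + s) :
    (a + √(a ^ 2 + s)) ^ 2 - s = 2 * a * (a + √(a ^ 2 + s)) := by
  linear_combination sq_sqrt hs

theorem sq_sub_lt_two_mul_of_lt_add_sqrt {a s x : ℝ} (hs : 0 ≤ s) (hx : 0 < x)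
    (hxr : x < a + √(a ^ 2 + s)) : x ^ 2 - s < 2 * a * x := by
  set r := √(a ^ 2 + s)
  have hr : r ^ 2 = a ^ 2 + s := sq_sqrt (by positivity)
  have har : a ≤ r := le_sqrt_of_sq_le (by linarith)
  -- `x² - 2ax - s = (x - (a - r)) (x - (a + r))` and `a - r ≤ 0 < x < a + r`
  nlinarith [mul_pos (show 0 < x - (a - r) by linarith) (show 0 < a + r - x by linarith)]

theorem lt_two_mul_of_lt_add_sqrt_sq_sub {a s t v : ℝ} (ha : 0 ≤ a) (hs : 0 ≤ s) (hv : 0 < v)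
    (htv : t + s ≤ v ^ 2) (ht : t < (a + √(a ^ 2 + s)) ^ 2 - s) : t < 2 * a * v := by
  rw [add_sqrt_sq_add_sq_sub (by positivity)] at ht
  rcases le_or_gt (a + √(a ^ 2 + s)) v with hrv | hvr
  · linarith [mul_le_mul_of_nonneg_left hrv (by positivity : (0 : ℝ) ≤ 2 * a)]
  · linarith [sq_sub_lt_two_mul_of_lt_add_sqrt hs hv hvr]

end Real

theorem hdlss_sure_classification_negative_general (np nm d C θ σ τ μ : ℝ)
    (hnp : 0 < np) (hd : 0 < d) (hC : 0 < C) (hθ : 0 < θ)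
    (ν : ℝ) (hν : ν = Real.sqrt (μ ^ 2 + σ ^ 2 / np + τ ^ 2 / nm)) (hνpos : 0 < ν)
    (T : ℝ)
    (hT : T = (1 / (2 * θ * Real.sqrt (d * C)) +
        Real.sqrt (1 / (4 * θ ^ 2 * d * C) + σ ^ 2 / np)) ^ 2 - σ ^ 2 / np)
    (h : τ ^ 2 / nm < T) :
    Real.sqrt d * (τ ^ 2 / nm) / ν < 1 / (θ * Real.sqrt C) := by
  set a := 1 / (2 * θ * Real.sqrt (d * C)) with ha
  have ha_sq : 1 / (4 * θ ^ 2 * d * C) = a ^ 2 := by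
    rw [div_pow, mul_pow, mul_pow, Real.sq_sqrt (by positivity)]; ring
  have hrhs : 1 / (θ * Real.sqrt C) = 2 * a * Real.sqrt d := by
    rw [ha, Real.sqrt_mul hd.le]; field_simp
  have hν_sq : ν ^ 2 = μ ^ 2 + σ ^ 2 / np + τ ^ 2 / nm := by
    rw [hν] at hνpos ⊢; exact Real.sq_sqrt (Real.sqrt_pos.mp hνpos).le
  have hlt : τ ^ 2 / nm < 2 * a * ν := by
    refine Real.lt_two_mul_of_lt_add_sqrt_sq_sub (s := σ ^ 2 / np) (by positivity) (by positivity)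
      hνpos ?_ ?_
    · rw [hν_sq]; linarith [sq_nonneg μ]
    · rwa [hT, ha_sq] at h
  rw [hrhs, div_lt_iff₀ hνpos]
  linarith [mul_lt_mul_of_pos_left hlt (Real.sqrt_pos.mpr hd)]

theorem hdlss_sure_classification_negative (np nm d C θ σ τ μ : ℝ)
    (hnp : 0 < np) (hnm : 0 < nm) (hd : 0 < d) (hC : 0 < C) (hθ : 0 < θ)
    (hσ : 0 ≤ σ) (hτ : 0 ≤ τ) (hμ : 0 ≤ μ)
    (ν : ℝ) (hν : ν = Real.sqrt (μ ^ 2 + σ ^ 2 / np + τ ^ 2 / nm)) (hνpos : 0 < ν)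
    (T : ℝ)
    (hT : T = (1 / (2 * θ * Real.sqrt (d * C)) +
        Real.sqrt (1 / (4 * θ ^ 2 * d * C) + σ ^ 2 / np)) ^ 2 - σ ^ 2 / np)
    (h : τ ^ 2 / nm < T) :
    Real.sqrt d * (τ ^ 2 / nm) / ν < 1 / (θ * Real.sqrt C) :=
  hdlss_sure_classification_negative_general np nm d C θ σ τ μ hnp hd hC hθ ν hν hνpos T hT h
end
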